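/- arXiv:2104.03905 — 2 statements merged into one kernel-verified Lean document; each statement's English description precedes it below -/
import Mathlib

section
/- Let n ≥ 2 be an integer and let [a:c] and [b:d] be vertices of the Farey graph G3(n) such that ad − bc ≡ 0 (mod n). Then the number of walks of length 2 in G3(n) between [a:c] and [b:d] equals n if [a:c] = [b:d], and equals 0 otherwise. -/
/-- The equivalence relation identifying `(a,c)` with `(-a,-c)` on the set of pairs of
elements of `ℤ/nℤ` generating the unit ideal. -/
def FareySetoid (n : ℕ) : Setoid {p : ZMod n × ZMod n // IsCoprime p.1 p.2} where
  r p q := p.1 = q.1 ∨ p.1 = -q.1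
  iseqv := by
    constructor
    · intro p; exact Or.inl rfl
    · rintro p q (h | h)
      · exact Or.inl h.symm
      · right; rw [h, neg_neg]
    · rintro p q s (h1 | h1) (h2 | h2)
      · exact Or.inl (h1.trans h2)
      · right; rw [h1, h2]
      · right; rw [h1, h2]
      · left; rw [h1, h2, neg_neg]

/-- The vertices of the Farey graph `G3(n)`: classes `[a:c]` of pairs `(a,c) ∈ (ℤ/nℤ)²`
generating the unit ideal, with `(a,c) ~ (-a,-c)`. -/
def FareyVertex (n : ℕ) := Quotient (FareySetoid n)

/-- The vertex `[a:c]` of the Farey graph. -/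
def FareyVertex.mk (n : ℕ) (a c : ZMod n) (h : IsCoprime a c) : FareyVertex n :=
  Quotient.mk (FareySetoid n) ⟨(a, c), h⟩

/-- The Farey graph `G3(n)`: vertices `[a:c]` and `[b:d]` are adjacent iff
`ad - bc ≡ ±1 (mod n)`. -/
def FareyGraph (n : ℕ) : SimpleGraph (FareyVertex n) where
  Adj u v := u ≠ v ∧ ∃ a c b d : ZMod n,
    (∃ h, u = FareyVertex.mk n a c h) ∧ (∃ h, v = FareyVertex.mk n b d h) ∧
    (a * d - b * c = 1 ∨ a * d - b * c = -1)
  symm := by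
    constructor
    rintro u v ⟨hne, a, c, b, d, hu, hv, h⟩
    refine ⟨hne.symm, b, d, a, c, hv, hu, ?_⟩
    rcases h with h | h
    · right; linear_combination -h
    · left; linear_combination -h
  loopless := ⟨fun u h => h.1 rfl⟩

instance (n : ℕ) [NeZero n] : Finite (FareyVertex n) := Quotient.finite _

/-- A pair of integers `b, d` with `gcd(b, d, n) = 1` yields a pair generating the unit
ideal of `ℤ/nℤ`. -/
lemma isCoprime_zmod_of_gcd {n : ℕ} {b d : ℤ} (h : Int.gcd b (Int.gcd d n) = 1) :
    IsCoprime (b : ZMod n) (d : ZMod n) := by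
  obtain ⟨u, v, huv⟩ := Int.isCoprime_iff_gcd_eq_one.mpr h
  have hgcd : ((Int.gcd d n : ℕ) : ℤ) = d * Int.gcdA d n + n * Int.gcdB d n :=
    Int.gcd_eq_gcd_ab d (n : ℤ)
  refine ⟨(u : ZMod n), ((v * Int.gcdA d (n : ℤ) : ℤ) : ZMod n), ?_⟩
  have huv' : u * b + (v * Int.gcdA d (n : ℤ)) * d + (v * Int.gcdB d (n : ℤ)) * n = 1 := by
    rw [← huv, hgcd]; ring
  have := congrArg (fun z : ℤ => (z : ZMod n)) huv'
  push_cast at this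
  rw [ZMod.natCast_self] at this
  push_cast
  linear_combination this
/-- The vertex `[b:d]` of `G3(n)` determined by integers `b`, `d` with `gcd(b,d,n) = 1`. -/
def FareyVertex.ofInt (n : ℕ) (b d : ℤ) (h : Int.gcd b (Int.gcd d n) = 1) : FareyVertex n :=
  FareyVertex.mk n (b : ZMod n) (d : ZMod n) (isCoprime_zmod_of_gcd h)

/-- The number of vertices of the Farey graph `G3(n)`. -/
noncomputable def fareyCard (n : ℕ) : ℕ := Nat.card (FareyVertex n)

/-- The characteristic polynomial of the (real) adjacency matrix of the Farey
graph `G3(n)` (junk value `1` for `n = 0`). -/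
noncomputable def fareyCharpoly (n : ℕ) : Polynomial ℝ :=
  if h : n = 0 then 1
  else
    letI : NeZero n := ⟨h⟩
    letI : Fintype (FareyVertex n) := Fintype.ofFinite _
    letI : DecidableEq (FareyVertex n) := Classical.decEq _
    letI : DecidableRel (FareyGraph n).Adj := Classical.decRel _
    Matrix.charpoly ((FareyGraph n).adjMatrix ℝ)

/-- The spectrum of the Farey graph `G3(n)`: the multiset of real roots, with
multiplicity, of the characteristic polynomial of its adjacency matrix. -/
noncomputable def sp3 (n : ℕ) : Multiset ℝ := (fareyCharpoly n).roots

/-!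
The neighbours of `[a:c]` are the classes of the solutions of `a y - x c = 1`: every neighbour
has a representative of determinant `1`, and only one, since the other representative has
determinant `-1` and coincides with it when `1 = -1`. If `p a + q c = 1`, these solutions are
`(-q + t a, p + t c)` for `t ∈ ℤ/nℤ`, so a vertex has exactly `n` neighbours.
If `[x:y]` is adjacent to `[a:c]` and `[b:d]` with determinants `ε₁` and `ε₂`, then
`ε₁ (b, d) + ε₂ (a, c) = (ad - bc) (x, y)`, so `ad - bc = 0` forces `[b:d] = [a:c]`.
-/

section CommRing

variable {R : Type*} [CommRing R]

def equivDetEqOne {a c p q : R} (hpq : p * a + q * c = 1) :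
    R ≃ {x : R × R // a * x.2 - x.1 * c = 1} where
  toFun t := ⟨(-q + t * a, p + t * c), by linear_combination hpq⟩
  invFun x := p * x.1.1 + q * x.1.2
  left_inv t := by linear_combination t * hpq
  right_inv x := by
    obtain ⟨⟨x, y⟩, hxy⟩ := x
    ext
    · linear_combination q * hxy + x * hpq
    · linear_combination -p * hxy + y * hpq

theorem add_eq_zero_of_det_eq_zero {a c b d x y e₁ e₂ : R} (h₀ : a * d - b * c = 0)
    (h₁ : a * y - x * c = e₁) (h₂ : x * d - b * y = e₂) :
    e₁ * b + e₂ * a = 0 ∧ e₁ * d + e₂ * c = 0 :=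
  ⟨by linear_combination x * h₀ - b * h₁ - a * h₂,
    by linear_combination y * h₀ - d * h₁ - c * h₂⟩

end CommRing

namespace FareyVertex

variable {n : ℕ}

theorem exists_eq_mk (u : FareyVertex n) : ∃ a c h, u = mk n a c h := by
  obtain ⟨⟨⟨a, c⟩, h⟩, rfl⟩ := Quotient.exists_rep u
  exact ⟨a, c, h, rfl⟩

theorem mk_eq_mk_iff {a c b d : ZMod n} {h : IsCoprime a c} {h' : IsCoprime b d} :
    mk n a c h = mk n b d h' ↔ (a = b ∧ c = d) ∨ (a = -b ∧ c = -d) := by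
  refine Quotient.eq.trans ?_
  change (a, c) = (b, d) ∨ (a, c) = -(b, d) ↔ _
  simp only [Prod.ext_iff, Prod.fst_neg, Prod.snd_neg]

theorem det_eq_zero_of_mk_eq_mk {a c b d : ZMod n} {h : IsCoprime a c} {h' : IsCoprime b d}
    (he : mk n a c h = mk n b d h') : a * d - b * c = 0 := by
  rcases mk_eq_mk_iff.mp he with ⟨rfl, rfl⟩ | ⟨rfl, rfl⟩ <;> ring

end FareyVertex

namespace FareyGraph

open FareyVertex

variable {n : ℕ}

theorem det_eq_one_or_neg_one_of_adj {a c b d : ZMod n} {h : IsCoprime a c}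
    {h' : IsCoprime b d} (hadj : (FareyGraph n).Adj (mk n a c h) (mk n b d h')) :
    a * d - b * c = 1 ∨ a * d - b * c = -1 := by
  obtain ⟨-, a', c', b', d', ⟨_, hu⟩, ⟨_, hv⟩, hdet⟩ := hadj
  have key : a * d - b * c = a' * d' - b' * c' ∨ a * d - b * c = -(a' * d' - b' * c') := by
    rcases mk_eq_mk_iff.mp hu with ⟨rfl, rfl⟩ | ⟨rfl, rfl⟩ <;>
      rcases mk_eq_mk_iff.mp hv with ⟨rfl, rfl⟩ | ⟨rfl, rfl⟩ <;>
      [left; right; right; left] <;> ring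
  rcases key with hk | hk <;> rcases hdet with hd | hd <;> rw [hk, hd] <;> simp

theorem mk_adj_mk_of_det (hn : 1 < n) {a c b d : ZMod n} {h : IsCoprime a c}
    {h' : IsCoprime b d} (hdet : a * d - b * c = 1 ∨ a * d - b * c = -1) :
    (FareyGraph n).Adj (mk n a c h) (mk n b d h') := by
  have : Fact (1 < n) := ⟨hn⟩
  refine ⟨fun he => ?_, a, c, b, d, ⟨h, rfl⟩, ⟨h', rfl⟩, hdet⟩
  rw [det_eq_zero_of_mk_eq_mk he] at hdet
  rcases hdet with hdet | hdet
  · exact zero_ne_one hdet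
  · exact zero_ne_one (neg_eq_zero.mp hdet.symm).symm

theorem bijective_mk_of_det_eq_one (hn : 1 < n) {a c : ZMod n} (h : IsCoprime a c) :
    Function.Bijective fun x : {x : ZMod n × ZMod n // a * x.2 - x.1 * c = 1} =>
      (⟨mk n x.1.1 x.1.2 ⟨-c, a, by linear_combination x.2⟩, mk_adj_mk_of_det hn (.inl x.2)⟩ :
        (FareyGraph n).neighborSet (mk n a c h)) := by
  constructor
  · rintro ⟨⟨x, y⟩, h₁⟩ ⟨⟨x', y'⟩, h₂⟩ he
    rcases mk_eq_mk_iff.mp (congrArg Subtype.val he) with ⟨rfl, rfl⟩ | ⟨hx, hy⟩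
    · rfl
    · -- both representatives have determinant `1`, so `2 = 0` and `-(x', y') = (x', y')`
      simp only [Subtype.mk.injEq, Prod.mk.injEq]
      constructor
      · linear_combination (1 + x' * c) * hx - x' * a * hy + x' * h₁ + x' * h₂
      · linear_combination (1 - y' * a) * hy + y' * c * hx + y' * h₁ + y' * h₂
  · rintro ⟨w, hw⟩
    obtain ⟨x, y, _, rfl⟩ := exists_eq_mk w
    rcases det_eq_one_or_neg_one_of_adj hw with hdet | hdet
    · exact ⟨⟨(x, y), hdet⟩, rfl⟩
    · refine ⟨⟨(-x, -y), by linear_combination -hdet⟩, Subtype.ext ?_⟩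
      exact mk_eq_mk_iff.mpr (.inr ⟨rfl, rfl⟩)

theorem card_neighborSet (hn : 1 < n) (u : FareyVertex n) :
    Nat.card ((FareyGraph n).neighborSet u) = n := by
  obtain ⟨a, c, h, rfl⟩ := exists_eq_mk u
  rw [← Nat.card_congr (Equiv.ofBijective _ (bijective_mk_of_det_eq_one hn h))]
  obtain ⟨p, q, hpq⟩ := h
  rw [← Nat.card_congr (equivDetEqOne hpq), Nat.card_zmod]

theorem card_adj_and_adj_self (hn : 1 < n) (u : FareyVertex n) :
    Nat.card {w // (FareyGraph n).Adj u w ∧ (FareyGraph n).Adj w u} = n :=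
  (Nat.card_congr (Equiv.subtypeEquivRight fun _ => and_iff_left_of_imp .symm)).trans
    (card_neighborSet hn u)

theorem eq_of_adj_of_adj_of_det_eq_zero {a c b d : ZMod n} {h : IsCoprime a c}
    {h' : IsCoprime b d} (h₀ : a * d - b * c = 0) {w : FareyVertex n}
    (hu : (FareyGraph n).Adj (mk n a c h) w) (hv : (FareyGraph n).Adj w (mk n b d h')) :
    mk n a c h = mk n b d h' := by
  obtain ⟨x, y, _, rfl⟩ := exists_eq_mk w
  rw [mk_eq_mk_iff]
  rcases det_eq_one_or_neg_one_of_adj hu with hu | hu <;>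
    rcases det_eq_one_or_neg_one_of_adj hv with hv | hv <;>
    obtain ⟨hb, hd⟩ := add_eq_zero_of_det_eq_zero h₀ hu hv
  · exact .inr ⟨by linear_combination hb, by linear_combination hd⟩
  · exact .inl ⟨by linear_combination -hb, by linear_combination -hd⟩
  · exact .inl ⟨by linear_combination hb, by linear_combination hd⟩
  · exact .inr ⟨by linear_combination -hb, by linear_combination -hd⟩

end FareyGraph

open FareyGraph in
/-- For `n ≥ 2` and vertices `[a:c]`, `[b:d]` of `G3(n)` with
`ad - bc ≡ 0 (mod n)`, the number of walks of length 2 between `[a:c]` and `[b:d]`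
(equivalently, the number of their common neighbours) is `n` if `[a:c] = [b:d]` and `0`
otherwise. -/
theorem stmt7 (n : ℕ) (hn : 2 ≤ n) (a c b d : ℤ)
    (h₁ : Int.gcd a (Int.gcd c n) = 1) (h₂ : Int.gcd b (Int.gcd d n) = 1)
    (h₀ : (n : ℤ) ∣ a * d - b * c) :
    let u : FareyVertex n := FareyVertex.ofInt n a c h₁
    let v : FareyVertex n := FareyVertex.ofInt n b d h₂
    let W : ℕ := Nat.card {w : FareyVertex n // (FareyGraph n).Adj u w ∧ (FareyGraph n).Adj w v}
    (u = v → W = n) ∧ (u ≠ v → W = 0) := by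
  intro u v W
  have hdet : (a : ZMod n) * d - b * c = 0 := by
    exact_mod_cast (ZMod.intCast_zmod_eq_zero_iff_dvd _ n).mpr h₀
  refine ⟨fun huv => ?_, fun huv => ?_⟩
  · change Nat.card {w // (FareyGraph n).Adj u w ∧ (FareyGraph n).Adj w v} = n
    rw [← huv]
    exact card_adj_and_adj_self hn u
  · have : IsEmpty {w // (FareyGraph n).Adj u w ∧ (FareyGraph n).Adj w v} :=
      ⟨fun w => huv (eq_of_adj_of_adj_of_det_eq_zero hdet w.2.1 w.2.2)⟩
    exact Nat.card_of_isEmpty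
end

section
/- For every odd integer n ≥ 3, any two vertices of the Hecke graph G4(n) are joined by a walk of length at most 4 (so G4(n) is connected with diameter at most 4). Likewise, for every integer n ≥ 2 not divisible by 3, any two vertices of the Hecke graph G6(n) are joined by a walk of length at most 4. -/
open Sum in
/-- The Hecke graph of level `n` with parameter `t` (the graphs `G4(n)` and `G6(n)` are
obtained for `t = 2` and `t = 3` respectively): the vertex set consists of two disjoint
copies of the vertices of `G3(n)` (even vertices `inl [a:c]` and odd vertices
`inr [b:d]`); an even vertex `[a:c]` and an odd vertex `[b:d]` are adjacent iff
`ad - t·bc ≡ ±1 (mod n)`, and no two vertices of the same parity are adjacent. -/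
def HeckeGraph (n : ℕ) (t : ℤ) : SimpleGraph (FareyVertex n ⊕ FareyVertex n) where
  Adj u v :=
    (∃ a c b d : ZMod n,
      (∃ h, u = inl (FareyVertex.mk n a c h)) ∧ (∃ h, v = inr (FareyVertex.mk n b d h)) ∧
      (a * d - (t : ZMod n) * (b * c) = 1 ∨ a * d - (t : ZMod n) * (b * c) = -1)) ∨
    (∃ a c b d : ZMod n,
      (∃ h, v = inl (FareyVertex.mk n a c h)) ∧ (∃ h, u = inr (FareyVertex.mk n b d h)) ∧
      (a * d - (t : ZMod n) * (b * c) = 1 ∨ a * d - (t : ZMod n) * (b * c) = -1))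
  symm := by
    constructor
    rintro u v (h | h)
    · exact Or.inr h
    · exact Or.inl h
  loopless := by
    constructor
    rintro u (⟨a, c, b, d, ⟨h₁, hu⟩, ⟨h₂, hv⟩, -⟩ | ⟨a, c, b, d, ⟨h₁, hv⟩, ⟨h₂, hu⟩, -⟩) <;>
      rw [hu] at hv
    · exact inl_ne_inr hv
    · exact inr_ne_inl hv

/-- The characteristic polynomial of the (real) adjacency matrix of the Hecke graph of
level `n` with parameter `t` (junk value `1` for `n = 0`). -/
noncomputable def heckeCharpoly (n : ℕ) (t : ℤ) : Polynomial ℝ :=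
  if h : n = 0 then 1
  else
    letI : NeZero n := ⟨h⟩
    letI : Fintype (FareyVertex n) := Fintype.ofFinite _
    letI : DecidableEq (FareyVertex n ⊕ FareyVertex n) := Classical.decEq _
    letI : DecidableRel (HeckeGraph n t).Adj := Classical.decRel _
    Matrix.charpoly ((HeckeGraph n t).adjMatrix ℝ)

/-- The spectrum of the Hecke graph of level `n` with parameter `t`: the multiset of real
roots, with multiplicity, of the characteristic polynomial of its adjacency matrix. -/
noncomputable def spHecke (n : ℕ) (t : ℤ) : Multiset ℝ := (heckeCharpoly n t).roots


section StableRange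

class HasStableRangeOne (R : Type*) [CommRing R] : Prop where
  exists_isUnit_add_mul {a b : R} : IsCoprime a b → ∃ s, IsUnit (a + s * b)

/-- Reduce modulo `d = gcd(b, n)`, where `b` vanishes so `a` becomes a unit, and lift that unit
back to `ZMod n`; the lift differs from `a` by a multiple of `d`, hence of `b`. -/
instance ZMod.hasStableRangeOne (n : ℕ) [NeZero n] : HasStableRangeOne (ZMod n) where
  exists_isUnit_add_mul {a b} h := by
    set d := b.val.gcd n
    have hd : d ∣ n := Nat.gcd_dvd_right _ _
    set π := ZMod.castHom hd (ZMod d)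
    have hπ (x : ZMod n) : π x = (x.val : ZMod d) := by
      rw [← map_natCast π, ZMod.natCast_zmod_val]
    have hb : π b = 0 := by
      rw [hπ, ZMod.natCast_eq_zero_iff]
      exact Nat.gcd_dvd_left _ _
    have ha : IsUnit (π a) := isCoprime_zero_right.mp (hb ▸ h.map π)
    obtain ⟨u, hu⟩ := ZMod.unitsMap_surjective hd ha.unit
    have hua : π ((u : ZMod n) - a) = 0 := by
      rw [map_sub, sub_eq_zero]
      exact congrArg Units.val hu
    obtain ⟨k, hk⟩ := (ZMod.natCast_eq_zero_iff _ _).mp ((hπ _).symm.trans hua)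
    have hdb : (d : ZMod n) = b * b.val.gcdA n := by
      have := congrArg (Int.cast : ℤ → ZMod n) (Nat.gcd_eq_gcd_ab b.val n)
      push_cast at this
      simpa using this
    refine ⟨b.val.gcdA n * k, ?_⟩
    have hval := congrArg (Nat.cast : ℕ → ZMod n) hk
    push_cast at hval
    rw [ZMod.natCast_zmod_val, hdb] at hval
    convert u.isUnit
    linear_combination -hval

end StableRange

section PairDet

variable {R : Type*} [CommRing R]

def pairDet (p q : R × R) : R := p.1 * q.2 - p.2 * q.1

/-- `ad - t·bc` for an even vertex `p = (a, c)` and an odd vertex `q = (b, d)`: Hecke adjacency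
is `heckeDet t p q = ±1`. -/
def heckeDet (t : R) (p q : R × R) : R := p.1 * q.2 - t * (q.1 * p.2)

lemma isCoprime_of_heckeDet_eq_one_left {t : R} {p q : R × R} (h : heckeDet t p q = 1) :
    IsCoprime p.1 p.2 :=
  ⟨q.2, -(t * q.1), by unfold heckeDet at h; linear_combination h⟩

lemma isCoprime_of_heckeDet_eq_one_right {t : R} {p q : R × R} (h : heckeDet t p q = 1) :
    IsCoprime q.1 q.2 :=
  ⟨-(t * p.2), p.1, by unfold heckeDet at h; linear_combination h⟩

/-- `pairDet p q` and `-pairDet p r` are the coordinates of `p` in the basis `(r, q)`, and a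
unimodular vector has coprime coordinates. -/
lemma isCoprime_pairDet_of_pairDet_eq_one {p q r : R × R} (hp : IsCoprime p.1 p.2)
    (h : pairDet r q = 1) : IsCoprime (pairDet p r) (pairDet p q) := by
  obtain ⟨x, y, hxy⟩ := hp
  refine ⟨-(x * q.1 + y * q.2), x * r.1 + y * r.2, ?_⟩
  unfold pairDet at *
  linear_combination hxy + (x * p.1 + y * p.2) * h

lemma exists_pairDet_eq_one_isUnit_pairDet [HasStableRangeOne R] {p q : R × R}
    (hp : IsCoprime p.1 p.2) (hq : IsCoprime q.1 q.2) :
    ∃ r, pairDet r q = 1 ∧ IsUnit (pairDet p r) := by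
  obtain ⟨x, y, hxy⟩ := hq
  have hr₀ : pairDet (y, -x) q = 1 := by simp only [pairDet]; linear_combination hxy
  obtain ⟨s, hs⟩ := HasStableRangeOne.exists_isUnit_add_mul
    (isCoprime_pairDet_of_pairDet_eq_one hp hr₀)
  refine ⟨(y, -x) + s • q, ?_, ?_⟩
  · simp only [pairDet, Prod.fst_add, Prod.snd_add, Prod.smul_fst, Prod.smul_snd, smul_eq_mul]
    linear_combination hxy
  · convert hs using 1
    simp only [pairDet, Prod.fst_add, Prod.snd_add, Prod.smul_fst, Prod.smul_snd, smul_eq_mul]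
    ring

lemma exists_heckeDet_eq_one_isUnit_pairDet [HasStableRangeOne R] {t : R} (ht : IsUnit t)
    {p q : R × R} (hp : IsCoprime p.1 p.2) (hq : IsCoprime q.1 q.2) :
    ∃ r, heckeDet t r q = 1 ∧ IsUnit (pairDet p r) := by
  obtain ⟨r, hr, hpr⟩ := exists_pairDet_eq_one_isUnit_pairDet (q := (t * q.1, q.2)) hp
    ((isCoprime_mul_unit_left_left ht _ _).mpr hq)
  exact ⟨r, by simp only [heckeDet, pairDet] at hr ⊢; linear_combination hr, hpr⟩

lemma exists_heckeDet_eq_one_of_isUnit_pairDet_left {t : R} (ht : IsUnit t) {p p' : R × R}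
    (h : IsUnit (pairDet p p')) : ∃ q, heckeDet t p q = 1 ∧ heckeDet t p' q = 1 := by
  obtain ⟨τ, hτ⟩ := ht.exists_right_inv
  obtain ⟨e, he⟩ := h.exists_right_inv
  refine ⟨(τ * e * (p'.1 - p.1), e * (p'.2 - p.2)), ?_, ?_⟩ <;>
    simp only [heckeDet, pairDet] at he ⊢
  · linear_combination he - e * p.2 * (p'.1 - p.1) * hτ
  · linear_combination he - e * p'.2 * (p'.1 - p.1) * hτ

lemma exists_heckeDet_eq_one_of_isUnit_pairDet_right {t : R} (ht : IsUnit t) {q q' : R × R}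
    (h : IsUnit (pairDet q q')) : ∃ p, heckeDet t p q = 1 ∧ heckeDet t p q' = 1 := by
  obtain ⟨τ, hτ⟩ := ht.exists_right_inv
  obtain ⟨e, he⟩ := h.exists_right_inv
  refine ⟨(e * (q.1 - q'.1), τ * e * (q.2 - q'.2)), ?_, ?_⟩ <;>
    simp only [heckeDet, pairDet] at he ⊢
  · linear_combination he - e * q.1 * (q.2 - q'.2) * hτ
  · linear_combination he - e * q'.1 * (q.2 - q'.2) * hτ

end PairDet

lemma FareyVertex.exists_eq_mk_s19 {n : ℕ} (v : FareyVertex n) :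
    ∃ p : ZMod n × ZMod n, ∃ h : IsCoprime p.1 p.2, v = .mk n p.1 p.2 h := by
  obtain ⟨⟨p, h⟩, rfl⟩ := Quotient.exists_rep v
  exact ⟨p, h, rfl⟩

namespace HeckeGraph

open Sum

variable {n : ℕ} {t : ℤ}

lemma adj_of_heckeDet_eq_one {p q : ZMod n × ZMod n} (h : heckeDet (t : ZMod n) p q = 1) :
    (HeckeGraph n t).Adj (inl (.mk n p.1 p.2 (isCoprime_of_heckeDet_eq_one_left h)))
      (inr (.mk n q.1 q.2 (isCoprime_of_heckeDet_eq_one_right h))) :=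
  Or.inl ⟨p.1, p.2, q.1, q.2, ⟨_, rfl⟩, ⟨_, rfl⟩, Or.inl h⟩

variable [NeZero n]

lemma exists_walk_inl_inr (ht : IsUnit (t : ZMod n)) {p q : ZMod n × ZMod n}
    (hp : IsCoprime p.1 p.2) (hq : IsCoprime q.1 q.2) :
    ∃ w : (HeckeGraph n t).Walk (inl (.mk n p.1 p.2 hp)) (inr (.mk n q.1 q.2 hq)),
      w.length = 3 := by
  obtain ⟨r, hrq, hpr⟩ := exists_heckeDet_eq_one_isUnit_pairDet ht hp hq
  obtain ⟨s, hps, hrs⟩ := exists_heckeDet_eq_one_of_isUnit_pairDet_left ht hpr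
  exact ⟨.cons (adj_of_heckeDet_eq_one hps) <| .cons (adj_of_heckeDet_eq_one hrs).symm <|
    .cons (adj_of_heckeDet_eq_one hrq) .nil, rfl⟩

lemma exists_walk_inl_inl (ht : IsUnit (t : ZMod n)) {p p' : ZMod n × ZMod n}
    (hp : IsCoprime p.1 p.2) (hp' : IsCoprime p'.1 p'.2) :
    ∃ w : (HeckeGraph n t).Walk (inl (.mk n p.1 p.2 hp)) (inl (.mk n p'.1 p'.2 hp')),
      w.length = 4 := by
  obtain ⟨r, hrp', hpr⟩ := exists_pairDet_eq_one_isUnit_pairDet hp hp'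
  obtain ⟨s, hps, hrs⟩ := exists_heckeDet_eq_one_of_isUnit_pairDet_left ht hpr
  obtain ⟨s', hrs', hp's'⟩ :=
    exists_heckeDet_eq_one_of_isUnit_pairDet_left ht (hrp' ▸ isUnit_one)
  exact ⟨.cons (adj_of_heckeDet_eq_one hps) <| .cons (adj_of_heckeDet_eq_one hrs).symm <|
    .cons (adj_of_heckeDet_eq_one hrs') <| .cons (adj_of_heckeDet_eq_one hp's').symm .nil, rfl⟩

lemma exists_walk_inr_inr (ht : IsUnit (t : ZMod n)) {q q' : ZMod n × ZMod n}
    (hq : IsCoprime q.1 q.2) (hq' : IsCoprime q'.1 q'.2) :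
    ∃ w : (HeckeGraph n t).Walk (inr (.mk n q.1 q.2 hq)) (inr (.mk n q'.1 q'.2 hq')),
      w.length = 4 := by
  obtain ⟨s, hsq', hqs⟩ := exists_pairDet_eq_one_isUnit_pairDet hq hq'
  obtain ⟨r, hrq, hrs⟩ := exists_heckeDet_eq_one_of_isUnit_pairDet_right ht hqs
  obtain ⟨r', hr's, hr'q'⟩ :=
    exists_heckeDet_eq_one_of_isUnit_pairDet_right ht (hsq' ▸ isUnit_one)
  exact ⟨.cons (adj_of_heckeDet_eq_one hrq).symm <| .cons (adj_of_heckeDet_eq_one hrs) <|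
    .cons (adj_of_heckeDet_eq_one hr's).symm <| .cons (adj_of_heckeDet_eq_one hr'q') .nil, rfl⟩

theorem exists_walk_length_le_four (ht : IsUnit (t : ZMod n))
    (u v : FareyVertex n ⊕ FareyVertex n) :
    ∃ w : (HeckeGraph n t).Walk u v, w.length ≤ 4 := by
  rcases u with u | u <;> rcases v with v | v <;>
    obtain ⟨p, hp, rfl⟩ := u.exists_eq_mk_s19 <;> obtain ⟨q, hq, rfl⟩ := v.exists_eq_mk_s19
  · obtain ⟨w, hw⟩ := exists_walk_inl_inl ht hp hq
    exact ⟨w, hw.le⟩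
  · obtain ⟨w, hw⟩ := exists_walk_inl_inr ht hp hq
    exact ⟨w, by omega⟩
  · obtain ⟨w, hw⟩ := exists_walk_inl_inr ht hq hp
    exact ⟨w.reverse, by simp [hw]⟩
  · obtain ⟨w, hw⟩ := exists_walk_inr_inr ht hp hq
    exact ⟨w, hw.le⟩

end HeckeGraph

/-- For every odd `n ≥ 3`, any two vertices of the Hecke graph
`G4(n) = HeckeGraph n 2` are joined by a walk of length at most 4; likewise for
`G6(n) = HeckeGraph n 3` for every `n ≥ 2` not divisible by `3`. -/
theorem stmt19 :
    (∀ n : ℕ, 3 ≤ n → Odd n → ∀ u v : FareyVertex n ⊕ FareyVertex n,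
      ∃ w : (HeckeGraph n 2).Walk u v, w.length ≤ 4) ∧
    (∀ n : ℕ, 2 ≤ n → ¬ (3 ∣ n) → ∀ u v : FareyVertex n ⊕ FareyVertex n,
      ∃ w : (HeckeGraph n 3).Walk u v, w.length ≤ 4) := by
  refine ⟨fun n hn hodd => ?_, fun n hn h3 => ?_⟩ <;> have : NeZero n := ⟨by omega⟩ <;>
    refine HeckeGraph.exists_walk_length_le_four ?_
  · exact_mod_cast (ZMod.isUnit_iff_coprime 2 n).mpr (Nat.coprime_two_left.mpr hodd)
  · exact_mod_cast (ZMod.isUnit_prime_iff_not_dvd Nat.prime_three).mpr h3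
end
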